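/- Closed form of the ADMM β-update for free coordinates, large-input regime: let λ0 ≥ 0, λ2 > 0, M > 0, ρ > 0 with √(λ0/λ2) ≤ M, and let t ∈ ℝ satisfy |t| > 2√(λ0λ2)/ρ + √(λ0/λ2). Then the minimum of β ↦ (ρ/2)(β − t)² + ψ(β) over β ∈ [−M, M] is attained at β* = clamp(ρt/(ρ + 2λ2), [−M, M]) = T(ρt/(ρ + 2λ2); 0, M). -/
import Mathlib


/-- The box-constrained soft-thresholding operator `T(t; a, m)`. -/
noncomputable def softT (t a m : ℝ) : ℝ :=
  if |t| ≤ a then 0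
  else if |t| ≤ a + m then (|t| - a) * Real.sign t
  else m * Real.sign t

/-- The penalty `ψ` for a free coordinate in the regime `√(λ0/λ2) ≤ M`. -/
noncomputable def psiFree (lam0 lam2 : ℝ) (t : ℝ) : ℝ :=
  if |t| ≤ Real.sqrt (lam0 / lam2) then 2 * Real.sqrt (lam0 * lam2) * |t|
  else lam0 + lam2 * t ^ 2

lemma admm_aux (lam0 lam2 M ρ t : ℝ) (hlam0 : 0 ≤ lam0)
    (hlam2 : 0 < lam2) (hM : 0 < M) (hρ : 0 < ρ)
    (hMcond : Real.sqrt (lam0 / lam2) ≤ M)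
    (ht : 2 * Real.sqrt (lam0 * lam2) / ρ + Real.sqrt (lam0 / lam2) < t) :
    ∀ β ∈ Set.Icc (-M) M,
      (ρ / 2) * (min M (max (-M) (ρ * t / (ρ + 2 * lam2))) - t) ^ 2
          + psiFree lam0 lam2 (min M (max (-M) (ρ * t / (ρ + 2 * lam2))))
        ≤ (ρ / 2) * (β - t) ^ 2 + psiFree lam0 lam2 β := by
  set s := Real.sqrt (lam0 / lam2) with hsdef
  set c := Real.sqrt (lam0 * lam2) with hcdef
  have hs0 : 0 ≤ s := Real.sqrt_nonneg _
  have hc0 : 0 ≤ c := Real.sqrt_nonneg _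
  have hs2 : lam2 * s ^ 2 = lam0 := by
    rw [hsdef, Real.sq_sqrt (div_nonneg hlam0 hlam2.le)]
    field_simp
  have hc : c = lam2 * s := by
    have hsq : (lam2 * s) ^ 2 = lam0 * lam2 := by linear_combination lam2 * hs2
    rw [hcdef, ← hsq, Real.sqrt_sq (by positivity)]
  have hden : (0:ℝ) < ρ + 2 * lam2 := by linarith
  set u := ρ * t / (ρ + 2 * lam2) with hudef
  have hu : u * (ρ + 2 * lam2) = ρ * t := div_mul_cancel₀ _ hden.ne'
  have ht0 : 0 < t := lt_of_le_of_lt (by positivity) ht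
  have h1 : 2 * c + ρ * s < ρ * t := by
    nlinarith [mul_pos hρ (sub_pos.2 ht), div_mul_cancel₀ (2*c) hρ.ne']
  have hsu : s < u := by nlinarith [hu, h1, hc, hden]
  have humax : max (-M) u = u := max_eq_right (by linarith)
  rw [humax]
  set b := min M u with hbdef
  have hbM : b ≤ M := min_le_left _ _
  have hbu : b ≤ u := min_le_right _ _
  have hsb : s ≤ b := le_min hMcond hsu.le
  have hb0 : 0 ≤ b := le_trans hs0 hsb
  have psi_ge : ∀ x : ℝ, s ≤ |x| → psiFree lam0 lam2 x = lam0 + lam2 * x ^ 2 := by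
    intro x hx
    simp only [psiFree]
    rw [← hsdef, ← hcdef]
    split_ifs with h
    · have hxx : |x| = s := le_antisymm h hx
      have hx2 : x ^ 2 = s ^ 2 := by rw [← sq_abs, hxx]
      rw [hxx]
      linear_combination 2 * s * hc + hs2 - lam2 * hx2
    · rfl
  have psi_mid : ∀ x : ℝ, |x| ≤ s → psiFree lam0 lam2 x = 2 * c * |x| := by
    intro x hx
    simp only [psiFree]
    rw [← hsdef, ← hcdef, if_pos hx]
  have hpsib : psiFree lam0 lam2 b = lam0 + lam2 * b ^ 2 :=
    psi_ge b (by rwa [abs_of_nonneg hb0])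
  have gcmp : ∀ x : ℝ, x ≤ M →
      (ρ/2) * (b - t) ^ 2 + (lam0 + lam2 * b ^ 2) ≤ (ρ/2) * (x - t) ^ 2 + (lam0 + lam2 * x ^ 2) := by
    intro x hx
    have e : (ρ/2) * (x - t) ^ 2 + lam2 * x ^ 2 - ((ρ/2) * (b - t) ^ 2 + lam2 * b ^ 2)
        = (ρ/2 + lam2) * ((x - u) ^ 2 - (b - u) ^ 2) := by
      linear_combination (x - b) * hu
    rcases le_or_gt u M with h' | h'
    · have hb : b = u := min_eq_right h'
      rw [hb] at e ⊢
      have h0 : ((u:ℝ) - u) ^ 2 = 0 := by ring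
      have hp := mul_nonneg (by positivity : (0:ℝ) ≤ ρ/2 + lam2) (sq_nonneg (x - u))
      linarith [e, hp, h0]
    · have hb : b = M := min_eq_left h'.le
      rw [hb] at e ⊢
      have h3 : (0:ℝ) ≤ (M - x) * (2 * u - x - M) :=
        mul_nonneg (by linarith) (by linarith)
      have hp := mul_nonneg (by positivity : (0:ℝ) ≤ ρ/2 + lam2) h3
      nlinarith [e, hp, sq_nonneg (x - u), sq_nonneg (M - u)]
  intro β hβ
  obtain ⟨hβ1, hβ2⟩ := hβ
  rw [hpsib]
  rcases le_or_gt s |β| with hcase | hcase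
  · rw [psi_ge β hcase]
    linarith [gcmp β hβ2]
  · have hβs : β ≤ s := le_trans (le_abs_self β) hcase.le
    have h2cs : lam0 + lam2 * s ^ 2 = 2 * c * s := by
      linear_combination (-1) * hs2 + (-2*s) * hc
    have habs : β ≤ |β| := le_abs_self β
    have hbr : 0 ≤ ρ * t - (ρ/2) * (β + s) - 2 * c := by
      linarith [h1, mul_nonneg hρ.le (sub_nonneg.2 hβs)]
    have step1 : (ρ/2) * (s - t) ^ 2 + (lam0 + lam2 * s ^ 2) ≤ (ρ/2) * (β - t) ^ 2 + 2 * c * |β| := by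
      linarith [mul_nonneg (sub_nonneg.2 hβs) hbr, mul_nonneg hc0 (sub_nonneg.2 habs), h2cs]
    rw [psi_mid β hcase.le]
    linarith [gcmp s hMcond, step1]

/-- Closed form of the ADMM `β`-update for free coordinates, large-input regime: if
`√(λ0/λ2) ≤ M` and `|t| > 2√(λ0λ2)/ρ + √(λ0/λ2)`, then the minimum of
`β ↦ (ρ/2)(β − t)² + ψ(β)` over `β ∈ [−M, M]` is attained at
`β* = clamp(ρt/(ρ + 2λ2), [−M, M]) = T(ρt/(ρ + 2λ2); 0, M)`. -/
theorem admm_beta_update_free_large (lam0 lam2 M ρ t : ℝ) (hlam0 : 0 ≤ lam0)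
    (hlam2 : 0 < lam2) (hM : 0 < M) (hρ : 0 < ρ)
    (hMcond : Real.sqrt (lam0 / lam2) ≤ M)
    (ht : 2 * Real.sqrt (lam0 * lam2) / ρ + Real.sqrt (lam0 / lam2) < |t|) :
    min M (max (-M) (ρ * t / (ρ + 2 * lam2))) = softT (ρ * t / (ρ + 2 * lam2)) 0 M ∧
    min M (max (-M) (ρ * t / (ρ + 2 * lam2))) ∈ Set.Icc (-M) M ∧
    ∀ β ∈ Set.Icc (-M) M,
      (ρ / 2) * (min M (max (-M) (ρ * t / (ρ + 2 * lam2))) - t) ^ 2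
          + psiFree lam0 lam2 (min M (max (-M) (ρ * t / (ρ + 2 * lam2))))
        ≤ (ρ / 2) * (β - t) ^ 2 + psiFree lam0 lam2 β := by
  have hden : (0:ℝ) < ρ + 2 * lam2 := by linarith
  have ht0 : t ≠ 0 := by
    intro h
    rw [h, abs_zero] at ht
    have h0 : (0:ℝ) ≤ 2 * Real.sqrt (lam0 * lam2) / ρ + Real.sqrt (lam0 / lam2) := by positivity
    linarith
  have hune : ρ * t / (ρ + 2 * lam2) ≠ 0 :=
    div_ne_zero (mul_ne_zero hρ.ne' ht0) hden.ne'
  refine ⟨?_, ⟨le_min (by linarith) (le_max_left _ _), min_le_left _ _⟩, ?_⟩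
  · unfold softT
    rw [if_neg (abs_pos.2 hune).not_ge]
    rcases lt_or_gt_of_ne hune with hun | hup
    · rw [Real.sign_of_neg hun]
      split_ifs with h
      · rw [zero_add] at h
        rw [max_eq_right (abs_le.1 h).1, min_eq_right (abs_le.1 h).2, abs_of_neg hun]
        ring
      · push_neg at h
        rw [zero_add] at h
        have hle : ρ * t / (ρ + 2 * lam2) ≤ -M := by
          rw [abs_of_neg hun] at h; linarith
        rw [max_eq_left hle, min_eq_right (by linarith : -M ≤ M)]
        ring
    · rw [Real.sign_of_pos hup]
      split_ifs with h
      · rw [zero_add] at h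
        rw [max_eq_right (abs_le.1 h).1, min_eq_right (abs_le.1 h).2, abs_of_pos hup]
        ring
      · push_neg at h
        rw [zero_add] at h
        have hle : M ≤ ρ * t / (ρ + 2 * lam2) := by
          rw [abs_of_pos hup] at h; linarith
        rw [max_eq_right (by linarith : -M ≤ ρ * t / (ρ + 2 * lam2)), min_eq_left hle]
        ring
  · rcases lt_or_gt_of_ne ht0 with hneg | hpos
    · have ht' : 2 * Real.sqrt (lam0 * lam2) / ρ + Real.sqrt (lam0 / lam2) < -t := by
        rwa [abs_of_neg hneg] at ht
      have key := admm_aux lam0 lam2 M ρ (-t) hlam0 hlam2 hM hρ hMcond ht'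
      intro β hβ
      have hβ' : -β ∈ Set.Icc (-M) M := ⟨by linarith [hβ.2], by linarith [hβ.1]⟩
      have h := key (-β) hβ'
      have hu' : ρ * (-t) / (ρ + 2 * lam2) = -(ρ * t / (ρ + 2 * lam2)) := by ring
      have hclamp : ∀ x : ℝ, min M (max (-M) (-x)) = -(min M (max (-M) x)) := by
        intro x
        simp only [min_def, max_def]
        split_ifs <;> linarith
      have hpsieven : ∀ x : ℝ, psiFree lam0 lam2 (-x) = psiFree lam0 lam2 x := by
        intro x
        simp only [psiFree, abs_neg, neg_sq]
      rw [hu', hclamp] at h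
      simp only [hpsieven] at h
      have hsq : ∀ a b : ℝ, (-a - -b) ^ 2 = (a - b) ^ 2 := by intros; ring
      rw [hsq, hsq] at h
      exact h
    · have ht' : 2 * Real.sqrt (lam0 * lam2) / ρ + Real.sqrt (lam0 / lam2) < t := by
        rwa [abs_of_pos hpos] at ht
      exact admm_aux lam0 lam2 M ρ t hlam0 hlam2 hM hρ hMcond ht'
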